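/- For every Laurent polynomial ξ ∈ ℤ[q,q^{-1}] there exists a unique ξ′ ∈ ℤ[q,q^{-1}] such that ξ′ is invariant under the ring involution q ↦ q^{-1} and ξ − ξ′ ∈ q^{-1}ℤ[q^{-1}] (i.e. ξ − ξ′ is a polynomial in q^{-1} with zero constant term). -/

import Mathlib

/-!
Bar-invariance means `coeff (-k) = coeff k`, and the truncation condition fixes the coefficients
in degrees `k ≥ 0` to be those of `ξ`; so `ξ'` must be, and is, `k ↦ ξ.coeff |k|`.
-/

open LaurentPolynomial

namespace LaurentPolynomial

section Semiring

variable {R : Type*} [Semiring R]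

noncomputable def symmetrize (f : R[T;T⁻¹]) : R[T;T⁻¹] :=
  AddMonoidAlgebra.ofCoeff <|
    Finsupp.onFinset (f.coeff.support ∪ f.coeff.support.map (Equiv.neg ℤ).toEmbedding)
      (fun k ↦ f.coeff |k|) fun k hk ↦ by
        rcases abs_choice k with h | h <;> simp_all [← Finsupp.mem_support_iff]

@[simp]
lemma coeff_symmetrize (f : R[T;T⁻¹]) (k : ℤ) : (symmetrize f).coeff k = f.coeff |k| := rfl

end Semiring

section CommSemiring

variable {R : Type*} [CommSemiring R]

@[simp]
lemma invert_symmetrize (f : R[T;T⁻¹]) : invert (symmetrize f) = symmetrize f := by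
  ext k
  simp

lemma eq_of_invert_eq_of_coeff_eq_of_nonneg {f g : R[T;T⁻¹]} (hf : invert f = f)
    (hg : invert g = g) (h : ∀ k : ℤ, 0 ≤ k → f.coeff k = g.coeff k) : f = g := by
  ext k
  rcases le_total 0 k with hk | hk
  · exact h k hk
  · rw [← hf, ← hg, invert_apply, invert_apply]
    exact h (-k) (neg_nonneg.mpr hk)

end CommSemiring

end LaurentPolynomial

theorem chariXi_bar_invariant_truncation (ξ : LaurentPolynomial ℤ) :
    ∃! ξ' : LaurentPolynomial ℤ,
      invert ξ' = ξ' ∧ ∀ k : ℤ, 0 ≤ k → AddMonoidAlgebra.coeff (ξ - ξ') k = 0 := by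
  have coeff_sub_eq_zero_iff (η : LaurentPolynomial ℤ) (k : ℤ) :
      AddMonoidAlgebra.coeff (ξ - η) k = 0 ↔ η.coeff k = ξ.coeff k := by
    rw [AddMonoidAlgebra.coeff_sub, Finsupp.sub_apply, sub_eq_zero, eq_comm]
  refine ⟨symmetrize ξ, ⟨invert_symmetrize ξ, fun k hk ↦ ?_⟩, ?_⟩
  · rw [coeff_sub_eq_zero_iff, coeff_symmetrize, abs_of_nonneg hk]
  · rintro η ⟨hη, hcoeff⟩
    refine eq_of_invert_eq_of_coeff_eq_of_nonneg hη (invert_symmetrize ξ) fun k hk ↦ ?_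
    rw [(coeff_sub_eq_zero_iff η k).mp (hcoeff k hk), coeff_symmetrize, abs_of_nonneg hk]
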